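/- Assume IC is empty, so S = W, and let M ⊆ W be the set of models of KB with belief set B = {p ⊆ W : M ⊆ p}. Let ⊖ : Set W → Set (Set W) satisfy the AGM contraction postulates for B. Define c : Set W → Set W by c a = ⋂₀ (⊖ a) (the intersection of all sentences in ⊖ a). Then c satisfies the contraction postulates for (W,M). -/

import Mathlib

/-- The consequence operator: sentences true in every common model of `X`. -/
def Cn {W : Type*} (X : Set (Set W)) : Set (Set W) := {p | ⋂₀ X ⊆ p}

/-- AGM expansion of a set of sentences `X` by a sentence `a`. -/
def Exp {W : Type*} (X : Set (Set W)) (a : Set W) : Set (Set W) := Cn (X ∪ {a})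

/-- `c` satisfies the contraction postulates for `(S, M)`. -/
def ContractionPostulates {W : Type*} (S M : Set W) (c : Set W → Set W) : Prop :=
  ∀ a b : Set W,
    c a ⊆ S ∧
    ((S \ a).Nonempty → ¬ c a ⊆ a) ∧
    M ⊆ c a ∧
    (¬ M ⊆ a → c a = M) ∧
    c a ∩ a ⊆ M ∧
    c (a ∩ b) ⊆ c a ∪ c b ∧
    (¬ c (a ∩ b) ⊆ a → c a ⊆ c (a ∩ b))

/-- `om` satisfies the AGM contraction postulates for belief set `B`. -/
def AGMContractionPostulates {W : Type*} (B : Set (Set W))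
    (om : Set W → Set (Set W)) : Prop :=
  ∀ a b : Set W,
    om a = Cn (om a) ∧
    om a ⊆ B ∧
    (a ∉ B → om a = B) ∧
    (a ≠ Set.univ → a ∉ om a) ∧
    B ⊆ Exp (om a) a ∧
    om a ∩ om b ⊆ om (a ∩ b) ∧
    (a ∉ om (a ∩ b) → om (a ∩ b) ⊆ om a)

theorem mem_Cn_iff {W : Type*} {X : Set (Set W)} {p : Set W} : p ∈ Cn X ↔ ⋂₀ X ⊆ p :=
  Iff.rfl

theorem mem_Exp_iff {W : Type*} {X : Set (Set W)} {a p : Set W} :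
    p ∈ Exp X a ↔ ⋂₀ X ∩ a ⊆ p := by
  rw [Exp, mem_Cn_iff, Set.sInter_union, Set.sInter_singleton]

theorem sInter_setOf_superset {W : Type*} (M : Set W) : ⋂₀ {p : Set W | M ⊆ p} = M :=
  (Set.sInter_subset_of_mem (subset_refl M)).antisymm (Set.subset_sInter fun _ hp => hp)

namespace AGMContractionPostulates

variable {W : Type*} {om : Set W → Set (Set W)} {a b : Set W}

section BeliefSet

variable {B : Set (Set W)} (hom : AGMContractionPostulates B om)
include hom

theorem mem_iff_sInter_subset {p : Set W} : p ∈ om a ↔ ⋂₀ om a ⊆ p := by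
  rw [← mem_Cn_iff, ← (hom a a).1]

theorem sInter_not_subset (ha : a ≠ Set.univ) : ¬ ⋂₀ om a ⊆ a :=
  fun h => (hom a a).2.2.2.1 ha (hom.mem_iff_sInter_subset.2 h)

/-- By closure, `⋂₀ om a ∪ ⋂₀ om b` lies in `om a` and `om b`, hence in `om (a ∩ b)`. -/
theorem sInter_inter_subset_union (a b : Set W) :
    ⋂₀ om (a ∩ b) ⊆ ⋂₀ om a ∪ ⋂₀ om b :=
  Set.sInter_subset_of_mem <| (hom a b).2.2.2.2.2.1
    ⟨hom.mem_iff_sInter_subset.2 Set.subset_union_left,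
      hom.mem_iff_sInter_subset.2 Set.subset_union_right⟩

theorem sInter_subset_sInter_inter (h : ¬ ⋂₀ om (a ∩ b) ⊆ a) :
    ⋂₀ om a ⊆ ⋂₀ om (a ∩ b) :=
  Set.sInter_subset_sInter <| (hom a b).2.2.2.2.2.2 fun ha => h (hom.mem_iff_sInter_subset.1 ha)

end BeliefSet

variable {M : Set W} (hom : AGMContractionPostulates {p : Set W | M ⊆ p} om)
include hom

theorem subset_sInter (a : Set W) : M ⊆ ⋂₀ om a :=
  Set.subset_sInter fun _ hp => (hom a a).2.1 hp

theorem sInter_eq_of_not_subset (h : ¬ M ⊆ a) : ⋂₀ om a = M := by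
  rw [(hom a a).2.2.1 h, sInter_setOf_superset]

theorem sInter_inter_subset (a : Set W) : ⋂₀ om a ∩ a ⊆ M :=
  mem_Exp_iff.1 <| (hom a a).2.2.2.2.1 (subset_refl M)

end AGMContractionPostulates

/-- An AGM contraction on belief sets induces a rational model-level contraction
(when `IC` is empty, i.e. `S = W`). -/
theorem AGM_contraction_induces_contraction
    {W : Type*} (M : Set W) (om : Set W → Set (Set W))
    (hom : AGMContractionPostulates {p : Set W | M ⊆ p} om) :
    ContractionPostulates Set.univ M (fun a => ⋂₀ (om a)) := by
  intro a b
  refine ⟨Set.subset_univ _, ?_, hom.subset_sInter a, hom.sInter_eq_of_not_subset,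
    hom.sInter_inter_subset a, hom.sInter_inter_subset_union a b, hom.sInter_subset_sInter_inter⟩
  rintro ⟨x, -, hx⟩
  exact hom.sInter_not_subset (Set.ne_univ_iff_exists_notMem a |>.2 ⟨x, hx⟩)
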